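/- arXiv:1005.1082 — 3 statements merged into one kernel-verified Lean document; each statement's English description precedes it below -/
import Mathlib

section
/- Let f : ℝⁿ → ℝ ∪ {±∞} be a convex function and let x ∈ ℝⁿ be a point where f is finite. Then for any v ∈ ℝⁿ, one has v ∈ rb ∂f(x) if and only if (v, −1) ∈ rb N_{epi f}(x, f(x)). -/
open MeasureTheory Set

/-- The convex subdifferential of an extended-real-valued function `f` at a point `x`. -/
noncomputable def subdiff {n : ℕ} (f : EuclideanSpace ℝ (Fin n) → EReal)
    (x : EuclideanSpace ℝ (Fin n)) : Set (EuclideanSpace ℝ (Fin n)) :=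
  {v | f x ≠ ⊤ ∧ f x ≠ ⊥ ∧ ∀ y, f x + ((inner ℝ v (y - x) : ℝ) : EReal) ≤ f y}

/-- The normal cone to a set `S ⊆ ℝⁿ × ℝ` at a point `p ∈ S` (inner product on `ℝⁿ × ℝ`
taken componentwise). -/
def normalConeProd {n : ℕ} (S : Set (EuclideanSpace ℝ (Fin n) × ℝ))
    (p : EuclideanSpace ℝ (Fin n) × ℝ) : Set (EuclideanSpace ℝ (Fin n) × ℝ) :=
  {w | ∀ q ∈ S, (inner ℝ w.1 (q.1 - p.1) : ℝ) + w.2 * (q.2 - p.2) ≤ 0}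

/-!
Write `S = ∂f(x)` and `N` for the normal cone to `epi f` at `(x, f x)`. Then `N` lies in the
half-space `t ≤ 0`, its part in `t < 0` is the cone over `S × {-1}`, and its horizontal vectors
`(u, 0)` are recession directions of `S`. Near `(v, -1)` the perspective map
`(u, t) ↦ (-t)⁻¹ • u` and the slice map `z ↦ (z, -1)` are continuous and inverse to each other
on `N` and `S`, so they match closures. For `v ∈ S`, the affine map `(u, t) ↦ u + (t + 1) • v`
sends `N`, hence `aff N`, into `aff S`; this makes the perspective map carry `aff N` into
`aff S` near `(v, -1)`, so the two maps also match relative interiors, and relative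
boundaries follow.
-/

open Filter Topology

theorem AffineMap.mapsTo_affineSpan {k V₁ P₁ V₂ P₂ : Type*} [Ring k] [AddCommGroup V₁]
    [Module k V₁] [AddTorsor V₁ P₁] [AddCommGroup V₂] [Module k V₂] [AddTorsor V₂ P₂]
    (φ : P₁ →ᵃ[k] P₂) {s : Set P₁} {Q : AffineSubspace k P₂} (h : MapsTo φ s Q) :
    MapsTo φ (affineSpan k s) Q := by
  have hle : (affineSpan k s).map φ ≤ Q := by
    rw [AffineSubspace.map_span, affineSpan_le]
    exact h.image_subset
  exact fun p hp => hle ⟨p, hp, rfl⟩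

theorem mem_intrinsicInterior_iff_mem_nhdsWithin {k V P : Type*} [Ring k] [AddCommGroup V]
    [Module k V] [TopologicalSpace P] [AddTorsor V P] {s : Set P} {z : P} :
    z ∈ intrinsicInterior k s ↔ z ∈ affineSpan k s ∧ s ∈ 𝓝[affineSpan k s] z := by
  constructor
  · rintro ⟨y, hy, rfl⟩
    exact ⟨y.2, preimage_coe_mem_nhds_subtype.1 (mem_interior_iff_mem_nhds.1 hy)⟩
  · rintro ⟨hz, hs⟩
    exact ⟨⟨z, hz⟩, mem_interior_iff_mem_nhds.2 (preimage_coe_mem_nhds_subtype.2 hs), rfl⟩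

section LowerCone

variable {E : Type*} [NormedAddCommGroup E] [NormedSpace ℝ E]

theorem continuousAt_perspective {q : E × ℝ} (hq : q.2 ≠ 0) :
    ContinuousAt (fun q : E × ℝ => (-q.2)⁻¹ • q.1) q :=
  ((continuous_snd.neg.continuousAt).inv₀ (neg_ne_zero.2 hq)).smul continuous_fst.continuousAt

structure IsLowerConeOver (S : Set E) (N : Set (E × ℝ)) : Prop where
  mem_iff_of_neg : ∀ u t, t < 0 → ((u, t) ∈ N ↔ (-t)⁻¹ • u ∈ S)
  snd_nonpos : ∀ q ∈ N, q.2 ≤ 0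
  add_mem_of_horizontal : ∀ v ∈ S, ∀ u, (u, 0) ∈ N → v + u ∈ S

namespace IsLowerConeOver

variable {S : Set E} {N : Set (E × ℝ)}

theorem mem_iff (h : IsLowerConeOver S N) (z : E) : (z, -1) ∈ N ↔ z ∈ S := by
  simpa using h.mem_iff_of_neg z (-1) (by norm_num)

theorem mem_closure_iff (h : IsLowerConeOver S N) (v : E) :
    (v, -1) ∈ closure N ↔ v ∈ closure S := by
  constructor
  · intro hv
    have hU : IsOpen {q : E × ℝ | q.2 < 0} := isOpen_lt continuous_snd continuous_const
    have hvU : (v, -1) ∈ closure ({q : E × ℝ | q.2 < 0} ∩ N) :=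
      hU.inter_closure ⟨by norm_num, hv⟩
    simpa using (continuousAt_perspective (by norm_num)).continuousWithinAt.mem_closure hvU
      fun q hq => (h.mem_iff_of_neg q.1 q.2 hq.1).1 hq.2
  · intro hv
    exact (continuous_id.prodMk continuous_const).continuousAt.continuousWithinAt.mem_closure hv
      fun z hz => (h.mem_iff z).2 hz

theorem mapsTo_affineSpan (h : IsLowerConeOver S N) {v : E} (hv : v ∈ S) :
    MapsTo (fun q : E × ℝ => q.1 + q.2 • v + v) (affineSpan ℝ N) (affineSpan ℝ S) := by
  let φ : E × ℝ →ᵃ[ℝ] E := (LinearMap.fst ℝ E ℝ + (LinearMap.snd ℝ E ℝ).smulRight v).toAffineMap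
    + AffineMap.const ℝ (E × ℝ) v
  refine φ.mapsTo_affineSpan ?_
  rintro ⟨u, t⟩ hq
  change u + t • v + v ∈ affineSpan ℝ S
  rcases (h.snd_nonpos _ hq).lt_or_eq with ht | rfl
  · have hw : (-t)⁻¹ • u ∈ S := (h.mem_iff_of_neg u t ht).1 hq
    have hline := AffineMap.lineMap_mem (-t) (subset_affineSpan ℝ S hv) (subset_affineSpan ℝ S hw)
    convert hline using 1
    rw [AffineMap.lineMap_apply, vsub_eq_sub, vadd_eq_add, smul_sub, smul_inv_smul₀ (by linarith)]
    module
  · simpa [add_comm] using subset_affineSpan ℝ S (h.add_mem_of_horizontal v hv u hq)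

theorem perspective_mem_affineSpan (h : IsLowerConeOver S N) {v : E} (hv : v ∈ S)
    {q : E × ℝ} (hq : q ∈ affineSpan ℝ N) (hq₂ : q.2 < 0) :
    (-q.2)⁻¹ • q.1 ∈ affineSpan ℝ S := by
  have hline := AffineMap.lineMap_mem (-q.2)⁻¹ (subset_affineSpan ℝ S hv)
    (h.mapsTo_affineSpan hv hq)
  convert hline using 1
  rw [AffineMap.lineMap_apply, vsub_eq_sub, vadd_eq_add]
  match_scalars <;> field_simp [hq₂.ne]
  ring

theorem mem_intrinsicInterior_iff (h : IsLowerConeOver S N) (v : E) :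
    (v, -1) ∈ intrinsicInterior ℝ N ↔ v ∈ intrinsicInterior ℝ S := by
  simp only [mem_intrinsicInterior_iff_mem_nhdsWithin]
  constructor
  · rintro ⟨hvN, hN⟩
    have hvS : v ∈ S := (h.mem_iff v).1 (mem_of_mem_nhdsWithin hvN hN)
    have hmaps : MapsTo (fun z : E => (z, (-1 : ℝ))) (affineSpan ℝ S) (affineSpan ℝ N) :=
      ((AffineMap.id ℝ E).prod (AffineMap.const ℝ E (-1 : ℝ))).mapsTo_affineSpan
        fun z hz => subset_affineSpan ℝ N ((h.mem_iff z).2 hz)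
    have hS := (continuous_id.prodMk continuous_const).continuousWithinAt.tendsto_nhdsWithin
      hmaps (hN : N ∈ 𝓝[affineSpan ℝ N] (v, -1))
    exact ⟨subset_affineSpan ℝ S hvS, mem_of_superset hS fun z hz => (h.mem_iff z).1 hz⟩
  · rintro ⟨hvS, hS⟩
    replace hvS : v ∈ S := mem_of_mem_nhdsWithin hvS hS
    have hneg : {q : E × ℝ | q.2 < 0} ∈ 𝓝[affineSpan ℝ N] (v, -1) :=
      mem_nhdsWithin_of_mem_nhds
        ((isOpen_lt continuous_snd continuous_const).mem_nhds (by norm_num))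
    have hmaps : MapsTo (fun q : E × ℝ => (-q.2)⁻¹ • q.1)
        (affineSpan ℝ N ∩ {q | q.2 < 0}) (affineSpan ℝ S) :=
      fun q hq => h.perspective_mem_affineSpan hvS hq.1 hq.2
    have hpersp := (continuousAt_perspective (q := (v, -1)) (by norm_num)).continuousWithinAt
      |>.tendsto_nhdsWithin hmaps
    rw [nhdsWithin_inter_of_mem' hneg] at hpersp
    refine ⟨subset_affineSpan ℝ N ((h.mem_iff v).2 hvS), ?_⟩
    filter_upwards [hpersp (by simpa using hS), hneg] with q hqS hq₂
    exact (h.mem_iff_of_neg q.1 q.2 hq₂).2 hqS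

theorem mem_intrinsicFrontier_iff [FiniteDimensional ℝ E] (h : IsLowerConeOver S N) (v : E) :
    (v, -1) ∈ intrinsicFrontier ℝ N ↔ v ∈ intrinsicFrontier ℝ S := by
  rw [← closure_sdiff_intrinsicInterior, ← closure_sdiff_intrinsicInterior, Set.mem_sdiff,
    Set.mem_sdiff, h.mem_closure_iff, h.mem_intrinsicInterior_iff]

end IsLowerConeOver

end LowerCone

def epi {n : ℕ} (f : EuclideanSpace ℝ (Fin n) → EReal) : Set (EuclideanSpace ℝ (Fin n) × ℝ) :=
  {p | f p.1 ≤ (p.2 : EReal)}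

section Epigraph

variable {n : ℕ} {f : EuclideanSpace ℝ (Fin n) → EReal} {x : EuclideanSpace ℝ (Fin n)} {r : ℝ}

theorem mem_subdiff_iff (hr : f x = r) {v : EuclideanSpace ℝ (Fin n)} :
    v ∈ subdiff f x ↔ ∀ q ∈ epi f, r + inner ℝ v (q.1 - x) ≤ q.2 := by
  constructor
  · rintro ⟨-, -, hv⟩ q hq
    have := (hv q.1).trans hq
    rwa [hr, ← EReal.coe_add, EReal.coe_le_coe_iff] at this
  · intro hv
    refine ⟨by simp [hr], by simp [hr], fun y => ?_⟩
    rw [hr, ← EReal.coe_add]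
    cases hy : f y using EReal.rec with
    | bot =>
      have := hv (y, r + inner ℝ v (y - x) - 1) (by simp [epi, hy])
      linarith
    | top => exact le_top
    | coe b => exact EReal.coe_le_coe (hv (y, b) (by simp [epi, hy]))

theorem isLowerConeOver_subdiff (hr : f x = r) :
    IsLowerConeOver (subdiff f x) (normalConeProd (epi f) (x, r)) where
  mem_iff_of_neg u t ht := by
    rw [mem_subdiff_iff hr]
    refine forall₂_congr fun q _ => ?_
    change _ + t * (q.2 - r) ≤ 0 ↔ _
    rw [real_inner_smul_left, ← le_sub_iff_add_le' (a := r), inv_mul_le_iff₀ (neg_pos.2 ht)]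
    constructor <;> intro <;> linarith
  snd_nonpos q hq := by
    have hx : (x, r + 1) ∈ epi f := show f x ≤ ((r + 1 : ℝ) : EReal) by
      rw [hr]; exact_mod_cast by linarith
    simpa using hq _ hx
  add_mem_of_horizontal v hv u hu := by
    rw [mem_subdiff_iff hr] at hv ⊢
    intro q hq
    have := hu q hq
    simp only [zero_mul, add_zero] at this
    linarith [hv q hq, inner_add_left (𝕜 := ℝ) v u (q.1 - x)]

end Epigraph

theorem stmt3_general {n : ℕ} (f : EuclideanSpace ℝ (Fin n) → EReal)
    (x : EuclideanSpace ℝ (Fin n)) (r : ℝ) (hr : f x = (r : EReal))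
    (v : EuclideanSpace ℝ (Fin n)) :
    v ∈ intrinsicFrontier ℝ (subdiff f x) ↔
      (v, (-1 : ℝ)) ∈ intrinsicFrontier ℝ
        (normalConeProd {p : EuclideanSpace ℝ (Fin n) × ℝ | f p.1 ≤ (p.2 : EReal)} (x, r)) :=
  ((isLowerConeOver_subdiff hr).mem_intrinsicFrontier_iff v).symm

/-- For a convex `f : ℝⁿ → ℝ ∪ {±∞}`, finite at `x` with value `r`, a vector `v` lies in
the relative boundary of `∂f(x)` iff `(v, -1)` lies in the relative boundary of the
normal cone to `epi f` at `(x, f x)`. -/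
theorem stmt3 {n : ℕ} (f : EuclideanSpace ℝ (Fin n) → EReal)
    (hconv : Convex ℝ {p : EuclideanSpace ℝ (Fin n) × ℝ | f p.1 ≤ (p.2 : EReal)})
    (x : EuclideanSpace ℝ (Fin n)) (r : ℝ) (hr : f x = (r : EReal))
    (v : EuclideanSpace ℝ (Fin n)) :
    v ∈ intrinsicFrontier ℝ (subdiff f x) ↔
      (v, (-1 : ℝ)) ∈ intrinsicFrontier ℝ
        (normalConeProd {p : EuclideanSpace ℝ (Fin n) × ℝ | f p.1 ≤ (p.2 : EReal)} (x, r)) :=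
  stmt3_general f x r hr v
end

section
/- Let f : ℝⁿ → ℝ ∪ {±∞} be a convex function, let x be a point where f is finite, and suppose ∂f(x) is nonempty. Then ri ∂f(x) = {v ∈ ℝⁿ : (v, −1) ∈ ri N_{epi f}(x, f(x))}. -/
open MeasureTheory Set

/-!
For a convex set `C` in finite dimension, `z ∈ ri C` iff every segment from a point of `C` to `z`
can be prolonged a little beyond `z` inside `C` (Rockafellar, Thm. 6.4). Now `∂f(x)` is the slice
`{v | (v, -1) ∈ N}` of the normal cone `N` to `epi f` at `(x, f x)`, a convex cone lying in the
half-space of nonpositive last coordinate. For such a cone the prolongation criterion for `N` at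
`(v, -1)` and for the slice at `v` are equivalent: a point `(u, s)` of `N` may be replaced by the
point where the ray through `(u, s) + (v, -1)` meets the slice.
-/

theorem add_smul_sub_mem_affineSpan {k V : Type*} [Ring k] [AddCommGroup V] [Module k V]
    {s : Set V} {x y z : V} (hx : x ∈ affineSpan k s) (hy : y ∈ affineSpan k s)
    (hz : z ∈ affineSpan k s) (t : k) : x + t • (y - z) ∈ affineSpan k s := by
  simpa [add_comm] using AffineSubspace.smul_vsub_vadd_mem _ t hy hz hx

section IntrinsicInterior

variable {E : Type*} [NormedAddCommGroup E] [NormedSpace ℝ E] {C : Set E}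

theorem mem_intrinsicInterior_iff_exists_pos_dist_lt {z : E} :
    z ∈ intrinsicInterior ℝ C ↔ z ∈ affineSpan ℝ C ∧
      ∃ ε > 0, ∀ q ∈ affineSpan ℝ C, dist q z < ε → q ∈ C := by
  rw [mem_intrinsicInterior]
  constructor
  · rintro ⟨z, hz, rfl⟩
    obtain ⟨ε, hε, hball⟩ := Metric.mem_nhds_iff.1 (mem_interior_iff_mem_nhds.1 hz)
    exact ⟨z.2, ε, hε, fun q hq hqz => @hball ⟨q, hq⟩ hqz⟩
  · rintro ⟨hz, ε, hε, hball⟩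
    refine ⟨⟨z, hz⟩, ?_, rfl⟩
    rw [mem_interior_iff_mem_nhds, Metric.mem_nhds_iff]
    exact ⟨ε, hε, fun q hq => hball q q.2 hq⟩

theorem Convex.add_smul_sub_mem_intrinsicInterior (hC : Convex ℝ C) {x y : E} (hx : x ∈ C)
    (hy : y ∈ intrinsicInterior ℝ C) {t : ℝ} (ht : t ∈ Ioc (0 : ℝ) 1) :
    x + t • (y - x) ∈ intrinsicInterior ℝ C := by
  obtain ⟨ht₀, ht₁⟩ := ht
  rw [mem_intrinsicInterior_iff_exists_pos_dist_lt] at hy ⊢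
  obtain ⟨hyA, ε, hε, hball⟩ := hy
  have hxA := subset_affineSpan ℝ C hx
  set z := x + t • (y - x)
  have hzA : z ∈ affineSpan ℝ C := add_smul_sub_mem_affineSpan hxA hyA hxA t
  refine ⟨hzA, t * ε, by positivity, fun q hqA hqz => ?_⟩
  -- `q` lies on the segment from `x` to a point `w` of the `ε`-ball around `y`.
  set w := y + t⁻¹ • (q - z)
  have hwC : w ∈ C := by
    refine hball w (add_smul_sub_mem_affineSpan hyA hqA hzA _) ?_
    rw [dist_eq_norm, add_sub_cancel_left, norm_smul, Real.norm_of_nonneg (by positivity),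
      ← dist_eq_norm, inv_mul_lt_iff₀ ht₀]
    exact hqz
  have hq : q = (1 - t) • x + t • w := by
    simp only [w, smul_add, smul_smul, mul_inv_cancel₀ ht₀.ne', one_smul, z]
    module
  rw [hq]
  exact hC hx hwC (by linarith) ht₀.le (by ring)

theorem Convex.mem_intrinsicInterior_iff_forall_exists_add_smul_sub_mem [FiniteDimensional ℝ E]
    (hC : Convex ℝ C) {z : E} :
    z ∈ intrinsicInterior ℝ C ↔ z ∈ C ∧ ∀ y ∈ C, ∃ ε > (0 : ℝ), z + ε • (z - y) ∈ C := by
  refine ⟨fun hz => ⟨intrinsicInterior_subset hz, fun y hy => ?_⟩, fun ⟨hzC, hext⟩ => ?_⟩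
  · obtain ⟨hzA, ε, hε, hball⟩ := mem_intrinsicInterior_iff_exists_pos_dist_lt.1 hz
    set δ := ε / (2 * (‖z - y‖ + 1))
    refine ⟨δ, by positivity, hball _ (add_smul_sub_mem_affineSpan hzA hzA
      (subset_affineSpan ℝ C hy) δ) ?_⟩
    rw [dist_eq_norm, add_sub_cancel_left, norm_smul, Real.norm_of_nonneg (by positivity),
      div_mul_eq_mul_div, div_lt_iff₀ (by positivity)]
    nlinarith [norm_nonneg (z - y)]
  · -- `z` lies strictly between a relative interior point `w` and the point `p ∈ C` beyond `z`.
    obtain ⟨w, hw⟩ := Set.Nonempty.intrinsicInterior hC ⟨z, hzC⟩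
    obtain ⟨ε, hε, hp⟩ := hext w (intrinsicInterior_subset hw)
    have hpz : z + ε • (z - w) + (ε / (1 + ε)) • (w - (z + ε • (z - w))) = z := by
      match_scalars <;> field_simp <;> ring
    rw [← hpz]
    refine hC.add_smul_sub_mem_intrinsicInterior hp hw ⟨by positivity, ?_⟩
    rw [div_le_one (by positivity)]
    linarith

end IntrinsicInterior

namespace ConvexCone

variable {E : Type*} [NormedAddCommGroup E] [NormedSpace ℝ E] [FiniteDimensional ℝ E]

theorem mem_intrinsicInterior_iff_forall_exists_sub_smul_mem (K : ConvexCone ℝ E) {z : E} :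
    z ∈ intrinsicInterior ℝ (K : Set E) ↔ z ∈ K ∧ ∀ q ∈ K, ∃ δ > (0 : ℝ), z - δ • q ∈ K := by
  simp only [K.convex.mem_intrinsicInterior_iff_forall_exists_add_smul_sub_mem, SetLike.mem_coe]
  refine and_congr_right fun hz => forall₂_congr fun q _ => ⟨?_, ?_⟩
  · rintro ⟨ε, hε, hext⟩
    refine ⟨ε / (1 + ε), by positivity, ?_⟩
    have hz' : z - (ε / (1 + ε)) • q = (1 + ε)⁻¹ • (z + ε • (z - q)) := by
      match_scalars <;> field_simp
    rw [hz']
    exact K.smul_mem (by positivity) hext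
  · rintro ⟨δ, hδ, hsub⟩
    refine ⟨δ, hδ, ?_⟩
    rw [show z + δ • (z - q) = (z - δ • q) + δ • z by module]
    exact K.add_mem hsub (K.smul_mem hδ hz)

theorem intrinsicInterior_setOf_mk_neg_one_mem (K : ConvexCone ℝ (E × ℝ))
    (hK : ∀ w ∈ K, w.2 ≤ 0) :
    intrinsicInterior ℝ {v : E | (v, (-1 : ℝ)) ∈ K} =
      {v : E | (v, (-1 : ℝ)) ∈ intrinsicInterior ℝ (K : Set (E × ℝ))} := by
  have hD : Convex ℝ {v : E | (v, (-1 : ℝ)) ∈ K} := by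
    intro v₁ h₁ v₂ h₂ a b ha hb hab
    have hcomb : ((a • v₁ + b • v₂, -1) : E × ℝ) = a • (v₁, -1) + b • (v₂, -1) := by
      ext <;> simp [← neg_add, hab]
    rw [mem_ofPred_eq, hcomb]
    exact K.convex h₁ h₂ ha hb hab
  ext v
  simp only [mem_ofPred_eq, hD.mem_intrinsicInterior_iff_forall_exists_add_smul_sub_mem,
    K.mem_intrinsicInterior_iff_forall_exists_sub_smul_mem]
  refine and_congr_right fun hv => ⟨fun hext => ?_, fun hcone => ?_⟩
  · rintro ⟨u, s⟩ hq
    have hs : 0 < 1 - s := by linarith [hK _ hq]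
    set y := (1 - s)⁻¹ • (v + u)
    have hy : (y, (-1 : ℝ)) = (1 - s)⁻¹ • ((v, -1) + (u, s)) := by
      ext
      · rfl
      · simp only [Prod.smul_snd, Prod.snd_add, smul_eq_mul]
        field_simp
        ring
    obtain ⟨ε, hε, hext⟩ := hext y (hy ▸ K.smul_mem (inv_pos.2 hs) (K.add_mem hv hq))
    obtain ⟨c, hc_def⟩ : ∃ c, c = 1 - s - s * ε := ⟨_, rfl⟩
    have hc : 0 < c := by nlinarith [hK _ hq]
    refine ⟨ε / c, by positivity, ?_⟩
    have hvu : ((v, -1) - (ε / c) • (u, s) : E × ℝ) = ((1 - s) / c) • (v + ε • (v - y), -1) := by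
      ext
      · simp only [y, Prod.fst_sub, Prod.smul_fst, smul_add, smul_sub, smul_smul]
        match_scalars <;> field_simp
        rw [hc_def]
        ring
      · simp only [Prod.snd_sub, Prod.smul_snd, smul_eq_mul]
        field_simp
        rw [hc_def]
        ring
    rw [hvu]
    exact K.smul_mem (by positivity) hext
  · intro y hy
    obtain ⟨δ, hδ, hsub⟩ := hcone _ hy
    refine ⟨δ, hδ, ?_⟩
    have hvy : ((v + δ • (v - y), -1) : E × ℝ) = ((v, -1) - δ • (y, -1)) + δ • (v, -1) := by
      ext
      · simp only [Prod.fst_add, Prod.fst_sub, Prod.smul_fst]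
        module
      · simp
    rw [hvy]
    exact K.add_mem hsub (K.smul_mem hδ hv)

end ConvexCone

section NormalCone

variable {n : ℕ}

def normalConeProdConvexCone (S : Set (EuclideanSpace ℝ (Fin n) × ℝ))
    (p : EuclideanSpace ℝ (Fin n) × ℝ) : ConvexCone ℝ (EuclideanSpace ℝ (Fin n) × ℝ) where
  carrier := normalConeProd S p
  smul_mem' c hc w hw q hq := by
    have := hw q hq
    simp only [Prod.smul_fst, Prod.smul_snd, real_inner_smul_left, smul_eq_mul]
    nlinarith
  add_mem' w₁ h₁ w₂ h₂ q hq := by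
    have := h₁ q hq
    have := h₂ q hq
    simp only [Prod.fst_add, Prod.snd_add, inner_add_left]
    linarith

theorem snd_nonpos_of_mem_normalConeProd {S : Set (EuclideanSpace ℝ (Fin n) × ℝ)}
    {p w : EuclideanSpace ℝ (Fin n) × ℝ} (hp : (p.1, p.2 + 1) ∈ S)
    (hw : w ∈ normalConeProd S p) : w.2 ≤ 0 := by
  simpa using hw _ hp

variable {f : EuclideanSpace ℝ (Fin n) → EReal} {x : EuclideanSpace ℝ (Fin n)} {r : ℝ}

theorem mem_subdiff_iff_forall_le (hr : f x = r) {v : EuclideanSpace ℝ (Fin n)} :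
    v ∈ subdiff f x ↔ ∀ y (ρ : ℝ), f y ≤ ρ → r + inner ℝ v (y - x) ≤ ρ := by
  simp only [subdiff, hr, ne_eq, EReal.coe_ne_top, EReal.coe_ne_bot, not_false_eq_true,
    true_and, mem_ofPred_eq, ← EReal.coe_add]
  refine forall_congr' fun y => ⟨fun h ρ hρ => EReal.coe_le_coe_iff.1 (h.trans hρ), fun h => ?_⟩
  cases hfy : f y using EReal.rec with
  | bot => linarith [h (r + inner ℝ v (y - x) - 1) (by simp [hfy])]
  | coe ρ => exact EReal.coe_le_coe_iff.2 (h ρ hfy.le)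
  | top => exact le_top

theorem subdiff_eq_setOf_mem_normalConeProd (hr : f x = r) :
    subdiff f x = {v | (v, (-1 : ℝ)) ∈
      normalConeProd {p : EuclideanSpace ℝ (Fin n) × ℝ | f p.1 ≤ (p.2 : EReal)} (x, r)} := by
  ext v
  rw [mem_subdiff_iff_forall_le hr]
  exact ⟨fun h q hq => by linarith [h q.1 q.2 hq], fun h y ρ hρ => by linarith [h (y, ρ) hρ]⟩

end NormalCone

theorem stmt4_general {n : ℕ} (f : EuclideanSpace ℝ (Fin n) → EReal)
    (x : EuclideanSpace ℝ (Fin n)) (r : ℝ) (hr : f x = (r : EReal)) :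
    intrinsicInterior ℝ (subdiff f x) =
      {v : EuclideanSpace ℝ (Fin n) | (v, (-1 : ℝ)) ∈ intrinsicInterior ℝ
        (normalConeProd {p : EuclideanSpace ℝ (Fin n) × ℝ | f p.1 ≤ (p.2 : EReal)} (x, r))} := by
  have hepi : f x ≤ ((r + 1 : ℝ) : EReal) := by
    rw [hr, EReal.coe_le_coe_iff]
    linarith
  rw [subdiff_eq_setOf_mem_normalConeProd hr]
  exact (normalConeProdConvexCone _ (x, r)).intrinsicInterior_setOf_mk_neg_one_mem
    fun w => snd_nonpos_of_mem_normalConeProd hepi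

/-- For a convex `f : ℝⁿ → ℝ ∪ {±∞}`, finite at `x` with value `r` and with `∂f(x) ≠ ∅`,
the relative interior of `∂f(x)` equals `{v | (v, -1) ∈ ri N_{epi f}(x, f x)}`. -/
theorem stmt4 {n : ℕ} (f : EuclideanSpace ℝ (Fin n) → EReal)
    (hconv : Convex ℝ {p : EuclideanSpace ℝ (Fin n) × ℝ | f p.1 ≤ (p.2 : EReal)})
    (x : EuclideanSpace ℝ (Fin n)) (r : ℝ) (hr : f x = (r : EReal))
    (hne : (subdiff f x).Nonempty) :
    intrinsicInterior ℝ (subdiff f x) =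
      {v : EuclideanSpace ℝ (Fin n) | (v, (-1 : ℝ)) ∈ intrinsicInterior ℝ
        (normalConeProd {p : EuclideanSpace ℝ (Fin n) × ℝ | f p.1 ≤ (p.2 : EReal)} (x, r))} :=
  stmt4_general f x r hr
end

section
/- Let A be an m × n real matrix with rows a₁, …, a_m and let b ∈ ℝᵐ, defining the polyhedron P = {x ∈ ℝⁿ : ⟨aᵢ, x⟩ ≤ bᵢ for all i}. Then for Lebesgue-almost every vector v ∈ ℝⁿ, if the linear program max{⟨v, x⟩ : x ∈ P} attains its maximum, then the maximizer x̄ is unique and there exists a dual vector λ ∈ ℝᵐ with λ ≥ 0, Σᵢ λᵢ aᵢ = v, λᵢ = 0 for every i with ⟨aᵢ, x̄⟩ < bᵢ, and λᵢ > 0 for every i with ⟨aᵢ, x̄⟩ = bᵢ (strict complementary slackness). -/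
/-!
The cones generated by the subfamilies `{aᵢ : i ∈ I}` are finitely many convex sets, so their
frontiers are null; take `v` off all of them. If `x̄` maximizes `⟨v, ·⟩` over `P` with active set
`I`, then `v` lies in the closure of the cone generated by `{aᵢ : i ∈ I}`: otherwise separation
gives a direction `d` with `⟨aᵢ, d⟩ ≤ 0` on `I` and `⟨v, d⟩ > 0`, and `x̄ + t d` is a better
feasible point for small `t > 0`. So `v` is in the interior of that cone. An interior point stays
in the cone after subtracting `ε ∑_{i ∈ I} aᵢ`, which yields multipliers that are strictly
positive on `I`; and the cone having interior makes `{aᵢ : i ∈ I}` span `ℝⁿ`. By complementary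
slackness every maximizer is tight on `I`, hence equals `x̄`.
-/

open MeasureTheory Filter Topology
open scoped RealInnerProductSpace NNReal

variable {ι E : Type*}

lemma ae_forall_notMem_frontier_of_convex {κ : Type*} [Countable κ] [NormedAddCommGroup E]
    [NormedSpace ℝ E] [FiniteDimensional ℝ E] [MeasurableSpace E] [BorelSpace E]
    (μ : Measure E) [μ.IsAddHaarMeasure] {s : κ → Set E} (hs : ∀ k, Convex ℝ (s k)) :
    ∀ᵐ v ∂μ, ∀ k, v ∉ frontier (s k) :=
  ae_all_iff.2 fun k => measure_eq_zero_iff_ae_notMem.1 ((hs k).addHaar_frontier μ)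

section Normed

variable [NormedAddCommGroup E] [NormedSpace ℝ E]

lemma exists_pos_sum_smul_eq_of_mem_interior_hull [Fintype ι] {a : ι → E} {I : Finset ι} {v : E}
    (hv : v ∈ interior (PointedCone.hull ℝ (a '' I) : Set E)) :
    ∃ lam : ι → ℝ, (∀ i, 0 ≤ lam i) ∧ ∑ i, lam i • a i = v ∧ (∀ i ∉ I, lam i = 0) ∧
      ∀ i ∈ I, 0 < lam i := by
  classical
  set u := ∑ i ∈ I, a i
  have hpath : Tendsto (fun ε : ℝ => v - ε • u) (𝓝[>] 0) (𝓝 v) := by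
    have : Tendsto (fun ε : ℝ => v - ε • u) (𝓝 0) (𝓝 (v - (0 : ℝ) • u)) :=
      tendsto_const_nhds.sub (tendsto_id.smul_const u)
    simpa using this.mono_left nhdsWithin_le_nhds
  obtain ⟨ε, hmem, hε⟩ :=
    ((hpath.eventually (mem_interior_iff_mem_nhds.1 hv)).and self_mem_nhdsWithin).exists
  obtain ⟨c, hc⟩ := (Submodule.mem_span_image_finset_iff_exists_fun' ℝ≥0).1 hmem
  refine ⟨fun i => if i ∈ I then c i + ε else 0, fun i => ?_, ?_, fun i hi => if_neg hi,
    fun i hi => ?_⟩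
  · dsimp only
    split_ifs <;> positivity
  · simp only [ite_smul, zero_smul, Finset.sum_ite_mem, Finset.univ_inter, add_smul,
      Finset.sum_add_distrib, ← Finset.smul_sum]
    exact eq_sub_iff_add_eq.1 hc
  · dsimp only
    rw [if_pos hi]
    positivity

lemma span_eq_top_of_mem_interior_hull {s : Set E} {v : E}
    (hv : v ∈ interior (PointedCone.hull ℝ s : Set E)) : Submodule.span ℝ s = ⊤ :=
  (Submodule.span ℝ s).eq_top_of_nonempty_interior'
    ⟨v, interior_mono (PointedCone.hull_le_span ℝ s) hv⟩

end Normed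

section InnerProduct

variable [NormedAddCommGroup E] [InnerProductSpace ℝ E]

lemma PointedCone.exists_inner_pos_of_notMem_closure [CompleteSpace E] {C : PointedCone ℝ E}
    {v : E} (hv : v ∉ closure (C : Set E)) : ∃ d, (∀ x ∈ C, ⟪x, d⟫ ≤ 0) ∧ 0 < ⟪v, d⟫ := by
  obtain ⟨y, hy, hvy⟩ := ProperCone.hyperplane_separation' (C := Submodule.closure C) (x₀ := v) hv
  refine ⟨-y, fun x hx => ?_, ?_⟩
  · simpa [inner_neg_right] using hy x (subset_closure hx)
  · simpa [inner_neg_right] using hvy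

lemma eq_of_forall_inner_eq_of_span_eq_top {s : Set E} {x y : E}
    (hs : Submodule.span ℝ s = ⊤) (h : ∀ u ∈ s, ⟪u, x⟫ = ⟪u, y⟫) : x = y := by
  have := LinearMap.ext_on (f := (innerₗ E).flip x) (g := (innerₗ E).flip y) hs h
  exact ext_inner_left ℝ fun w => LinearMap.congr_fun this w

def polyhedron (a : ι → E) (b : ι → ℝ) : Set E := {x | ∀ i, ⟪a i, x⟫ ≤ b i}

noncomputable def activeSet [Fintype ι] (a : ι → E) (b : ι → ℝ) (x : E) : Finset ι :=
  {i | ⟪a i, x⟫ = b i}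

@[simp]
lemma mem_activeSet [Fintype ι] {a : ι → E} {b : ι → ℝ} {x : E} {i : ι} :
    i ∈ activeSet a b x ↔ ⟪a i, x⟫ = b i := by
  simp [activeSet]

lemma exists_pos_add_smul_mem_polyhedron [Fintype ι] {a : ι → E} {b : ι → ℝ} {x d : E}
    (hx : x ∈ polyhedron a b) (hd : ∀ i ∈ activeSet a b x, ⟪a i, d⟫ ≤ 0) :
    ∃ t : ℝ, 0 < t ∧ x + t • d ∈ polyhedron a b := by
  have hnear : ∀ i, ∀ᶠ t in 𝓝[>] (0 : ℝ), ⟪a i, x + t • d⟫ ≤ b i := by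
    intro i
    by_cases hi : ⟪a i, x⟫ = b i
    · filter_upwards [self_mem_nhdsWithin] with t (ht : 0 < t)
      rw [inner_add_right, real_inner_smul_right, hi]
      nlinarith [hd i (mem_activeSet.2 hi)]
    · have hcont : Continuous fun t : ℝ => ⟪a i, x + t • d⟫ := by fun_prop
      refine nhdsWithin_le_nhds ((hcont.tendsto 0).eventually (eventually_le_nhds ?_))
      simpa using (hx i).lt_of_ne hi
  obtain ⟨t, ht, hmem⟩ := ((eventually_all.2 hnear).and self_mem_nhdsWithin).exists
  exact ⟨t, hmem, ht⟩

lemma mem_closure_hull_activeSet_of_isMaxOn [Fintype ι] [CompleteSpace E] {a : ι → E}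
    {b : ι → ℝ} {x v : E} (hx : x ∈ polyhedron a b)
    (hmax : IsMaxOn (⟪v, ·⟫) (polyhedron a b) x) :
    v ∈ closure (PointedCone.hull ℝ (a '' activeSet a b x) : Set E) := by
  by_contra hv
  obtain ⟨d, hd, hvd⟩ := PointedCone.exists_inner_pos_of_notMem_closure hv
  obtain ⟨t, ht, hmem⟩ := exists_pos_add_smul_mem_polyhedron hx fun i hi =>
    hd _ (PointedCone.subset_hull ⟨i, hi, rfl⟩)
  have hle : ⟪v, x + t • d⟫ ≤ ⟪v, x⟫ := hmax hmem
  rw [inner_add_right, real_inner_smul_right] at hle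
  nlinarith

lemma inner_sub_eq_sum_mul_sub [Fintype ι] {a : ι → E} {b : ι → ℝ} {x y v : E} {lam : ι → ℝ}
    (hslack : ∀ i, lam i ≠ 0 → ⟪a i, x⟫ = b i) (hv : ∑ i, lam i • a i = v) :
    ⟪v, y - x⟫ = ∑ i, lam i * (⟪a i, y⟫ - b i) := by
  rw [← hv, sum_inner]
  refine Finset.sum_congr rfl fun i _ => ?_
  rw [real_inner_smul_left, inner_sub_right]
  by_cases hi : lam i = 0
  · simp [hi]
  · rw [hslack i hi]

lemma eq_of_mem_polyhedron_of_inner_le [Fintype ι] {a : ι → E} {b : ι → ℝ} {x y v : E}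
    {lam : ι → ℝ} (hlam : ∀ i, 0 ≤ lam i) (hv : ∑ i, lam i • a i = v)
    (hzero : ∀ i ∉ activeSet a b x, lam i = 0) (hpos : ∀ i ∈ activeSet a b x, 0 < lam i)
    (hspan : Submodule.span ℝ (a '' activeSet a b x) = ⊤)
    (hy : y ∈ polyhedron a b) (hle : ⟪v, x⟫ ≤ ⟪v, y⟫) : y = x := by
  have hslack : ∀ i, lam i ≠ 0 → ⟪a i, x⟫ = b i := fun i hi =>
    mem_activeSet.1 (by_contra fun h => hi (hzero i h))
  have hterm : ∀ i, lam i * (⟪a i, y⟫ - b i) ≤ 0 := fun i =>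
    mul_nonpos_of_nonneg_of_nonpos (hlam i) (sub_nonpos.2 (hy i))
  have hsum : ∑ i, lam i * (⟪a i, y⟫ - b i) = 0 := by
    refine le_antisymm (Finset.sum_nonpos fun i _ => hterm i) ?_
    rw [← inner_sub_eq_sum_mul_sub hslack hv, inner_sub_right]
    linarith
  have htight := (Finset.sum_eq_zero_iff_of_nonpos fun i _ => hterm i).1 hsum
  refine eq_of_forall_inner_eq_of_span_eq_top hspan ?_
  rintro _ ⟨i, hi, rfl⟩
  have hyi := (mul_eq_zero.1 (htight i (Finset.mem_univ i))).resolve_left (hpos i hi).ne'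
  rw [mem_activeSet.1 hi]
  linarith

end InnerProduct

/-- Consider the polyhedron `P = {x : ⟨aᵢ, x⟩ ≤ bᵢ for all i}`.  For almost every
`v ∈ ℝⁿ`, if the linear program `max {⟨v, x⟩ : x ∈ P}` attains its maximum at `x̄`, then
`x̄` is the unique maximizer and there is a dual vector `λ ≥ 0` with `Σ λᵢ aᵢ = v`,
`λᵢ = 0` whenever `⟨aᵢ, x̄⟩ < bᵢ`, and `λᵢ > 0` whenever `⟨aᵢ, x̄⟩ = bᵢ`. -/
theorem stmt13 {n m : ℕ} (a : Fin m → EuclideanSpace ℝ (Fin n)) (b : Fin m → ℝ) :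
    ∀ᵐ v : EuclideanSpace ℝ (Fin n), ∀ xbar : EuclideanSpace ℝ (Fin n),
      (∀ i, (inner ℝ (a i) xbar : ℝ) ≤ b i) →
      (∀ x : EuclideanSpace ℝ (Fin n), (∀ i, (inner ℝ (a i) x : ℝ) ≤ b i) →
        (inner ℝ v x : ℝ) ≤ inner ℝ v xbar) →
      ((∀ x' : EuclideanSpace ℝ (Fin n), (∀ i, (inner ℝ (a i) x' : ℝ) ≤ b i) →
          (∀ x : EuclideanSpace ℝ (Fin n), (∀ i, (inner ℝ (a i) x : ℝ) ≤ b i) →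
            (inner ℝ v x : ℝ) ≤ inner ℝ v x') → x' = xbar) ∧
        ∃ lam : Fin m → ℝ, (∀ i, 0 ≤ lam i) ∧ (∑ i, lam i • a i) = v ∧
          (∀ i, (inner ℝ (a i) xbar : ℝ) < b i → lam i = 0) ∧
          (∀ i, (inner ℝ (a i) xbar : ℝ) = b i → 0 < lam i)) := by
  filter_upwards [ae_forall_notMem_frontier_of_convex volume
    fun I : Finset (Fin m) => (PointedCone.hull ℝ (a '' I)).convex]
    with v hfrontier xbar hxbar hmax
  have hint : v ∈ interior (PointedCone.hull ℝ (a '' activeSet a b xbar) : Set _) := by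
    by_contra h
    exact hfrontier _ ⟨mem_closure_hull_activeSet_of_isMaxOn hxbar hmax, h⟩
  obtain ⟨lam, hlam, hsum, hzero, hpos⟩ := exists_pos_sum_smul_eq_of_mem_interior_hull hint
  refine ⟨fun y hy hmax' => ?_, lam, hlam, hsum, fun i hi => hzero i ?_, fun i hi => hpos i ?_⟩
  · exact eq_of_mem_polyhedron_of_inner_le hlam hsum hzero hpos
      (span_eq_top_of_mem_interior_hull hint) hy (hmax' xbar hxbar)
  · exact fun h => hi.ne (mem_activeSet.1 h)
  · exact mem_activeSet.2 hi
end
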